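/- arXiv:1904.03858 — 2 statements merged into one kernel-verified Lean document; each statement's English description precedes it below -/
import Mathlib

section
/- For any vector u ∈ ℝ^{C(n,ℓ)}, the voting matrix satisfies ‖V(u)‖_F² ≤ ℓ²‖u‖⁴. -/
/-- The `n × n` voting matrix of a vector `u` indexed by `ℓ`-subsets of `[n]`:
zero diagonal, and `V_{ij}(u) = Σ_{S : |S|=ℓ, i∈S, j∉S} u_S · u_{S ∆ {i,j}}` off-diagonal. -/
noncomputable def voting (n ℓ : ℕ) (v : Finset (Fin n) → ℝ) (i j : Fin n) : ℝ :=
  if i = j then 0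
  else ∑ S ∈ Finset.univ.filter
      (fun S : Finset (Fin n) => S.card = ℓ ∧ i ∈ S ∧ j ∉ S),
    v S * v (symmDiff S {i, j})

/-- Squared Euclidean norm of a vector indexed by `ℓ`-subsets of `[n]`. -/
noncomputable def sqnorm (n ℓ : ℕ) (v : Finset (Fin n) → ℝ) : ℝ :=
  ∑ S ∈ Finset.univ.filter (fun S : Finset (Fin n) => S.card = ℓ), v S ^ 2

/-- Auxiliary: the squared mass of `u` on `ℓ`-sets containing `i`. -/
noncomputable def bfun (n ℓ : ℕ) (u : Finset (Fin n) → ℝ) (i : Fin n) : ℝ :=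
  ∑ S ∈ Finset.univ.filter (fun S : Finset (Fin n) => S.card = ℓ ∧ i ∈ S), u S ^ 2

lemma bfun_nonneg (n ℓ : ℕ) (u : Finset (Fin n) → ℝ) (i : Fin n) : 0 ≤ bfun n ℓ u i :=
  Finset.sum_nonneg fun _ _ => sq_nonneg _

lemma bfun_sum (n ℓ : ℕ) (u : Finset (Fin n) → ℝ) :
    ∑ i : Fin n, bfun n ℓ u i = (ℓ : ℝ) * sqnorm n ℓ u := by
  have h : ∀ i : Fin n, bfun n ℓ u i
      = ∑ S ∈ Finset.univ.filter (fun S : Finset (Fin n) => S.card = ℓ),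
        (if i ∈ S then u S ^ 2 else 0) := by
    intro i
    rw [bfun, Finset.sum_filter]
    rw [Finset.sum_filter]
    apply Finset.sum_congr rfl
    intro S _
    by_cases h1 : S.card = ℓ <;> by_cases h2 : i ∈ S <;> simp [h1, h2]
  simp_rw [h]
  rw [Finset.sum_comm]
  rw [sqnorm, Finset.mul_sum]
  apply Finset.sum_congr rfl
  intro S hS
  simp only [Finset.mem_filter] at hS
  rw [Finset.sum_ite_mem, Finset.univ_inter, Finset.sum_const, nsmul_eq_mul, hS.2]

lemma key (n ℓ : ℕ) (u : Finset (Fin n) → ℝ) (i j : Fin n) :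
    (voting n ℓ u i j) ^ 2 ≤ bfun n ℓ u i * bfun n ℓ u j := by
  by_cases hij : i = j
  · simp only [voting, hij, if_pos rfl]
    simpa using mul_nonneg (bfun_nonneg n ℓ u j) (bfun_nonneg n ℓ u j)
  · rw [voting, if_neg hij]
    set A := Finset.univ.filter
      (fun S : Finset (Fin n) => S.card = ℓ ∧ i ∈ S ∧ j ∉ S) with hA
    calc (∑ S ∈ A, u S * u (symmDiff S {i, j})) ^ 2
        ≤ (∑ S ∈ A, u S ^ 2) * (∑ S ∈ A, u (symmDiff S {i, j}) ^ 2) :=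
          Finset.sum_mul_sq_le_sq_mul_sq A _ _
      _ ≤ bfun n ℓ u i * bfun n ℓ u j := by
          apply mul_le_mul
          · apply Finset.sum_le_sum_of_subset_of_nonneg
            · intro S hS
              simp only [hA, Finset.mem_filter] at hS ⊢
              exact ⟨hS.1, hS.2.1, hS.2.2.1⟩
            · intro _ _ _; exact sq_nonneg _
          · -- reindex via symmDiff with {i,j}
            have hinj : Set.InjOn (fun S : Finset (Fin n) => symmDiff S {i, j}) A := by
              intro S _ T _ h
              have := congrArg (fun X => symmDiff X ({i, j} : Finset (Fin n))) h
              simpa [symmDiff_symmDiff_cancel_right] using this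
            have himg := Finset.sum_image (s := A) (g := fun S => symmDiff S {i, j})
              (f := fun T => u T ^ 2) (fun S hS T hT h => hinj hS hT h)
            rw [← himg]
            apply Finset.sum_le_sum_of_subset_of_nonneg
            · intro T hT
              simp only [Finset.mem_image] at hT
              obtain ⟨S, hS, rfl⟩ := hT
              simp only [hA, Finset.mem_filter, Finset.mem_univ, true_and] at hS
              obtain ⟨hcard, hiS, hjS⟩ := hS
              have hji : j ≠ i := fun h => hij h.symm
              have h1 : symmDiff S ({i, j} : Finset (Fin n)) = insert j (S.erase i) := by
                ext x
                simp only [Finset.mem_symmDiff, Finset.mem_insert, Finset.mem_erase,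
                  Finset.mem_singleton]
                by_cases hx1 : x = i <;> by_cases hx2 : x = j <;>
                  simp [hx1, hx2, hiS, hjS] <;> tauto
              simp only [Finset.mem_filter, Finset.mem_univ, true_and]
              constructor
              · rw [h1, Finset.card_insert_of_notMem (by simp [hjS, Finset.mem_erase]),
                  Finset.card_erase_of_mem hiS]
                have hpos : 1 ≤ S.card := Finset.card_pos.mpr ⟨i, hiS⟩
                omega
              · rw [h1]; exact Finset.mem_insert_self _ _
            · intro _ _ _; exact sq_nonneg _
          · exact Finset.sum_nonneg fun _ _ => sq_nonneg _
          · exact bfun_nonneg n ℓ u i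

/-- For any vector `u` indexed by `ℓ`-subsets, the voting matrix satisfies
`‖V(u)‖_F² ≤ ℓ²‖u‖⁴`. -/
theorem stmt9 (n ℓ : ℕ) (u : Finset (Fin n) → ℝ) :
    (∑ i : Fin n, ∑ j : Fin n, (voting n ℓ u i j) ^ 2)
      ≤ (ℓ : ℝ) ^ 2 * (sqnorm n ℓ u) ^ 2 := by
  calc (∑ i : Fin n, ∑ j : Fin n, (voting n ℓ u i j) ^ 2)
      ≤ ∑ i : Fin n, ∑ j : Fin n, bfun n ℓ u i * bfun n ℓ u j := by
        apply Finset.sum_le_sum; intro i _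
        apply Finset.sum_le_sum; intro j _
        exact key n ℓ u i j
    _ = (∑ i : Fin n, bfun n ℓ u i) * (∑ j : Fin n, bfun n ℓ u j) := by
        rw [Finset.sum_mul]
        apply Finset.sum_congr rfl
        intro i _
        rw [Finset.mul_sum]
    _ = (ℓ : ℝ) ^ 2 * (sqnorm n ℓ u) ^ 2 := by
        rw [bfun_sum]; ring
end

section
/- If v ∈ ℝ^{C(n,ℓ)} lies in the span of the eigenspaces Y_0, …, Y_m of the Johnson scheme (equivalently, v satisfies the Poincaré inequality Inf[v] ≤ m·Var[v]), then the entries of its voting matrix satisfy Σ_{i,j=1}^n V_{ij}(v) ≥ ((ℓ − m)n − ℓ²)·‖v‖². -/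
/-- `v^{(ij)}`: exchange the roles of `i` and `j` whenever possible. -/
noncomputable def exchg (n : ℕ) (v : Finset (Fin n) → ℝ) (i j : Fin n)
    (S : Finset (Fin n)) : ℝ :=
  if (S ∩ {i, j}).card = 1 then v (symmDiff S {i, j}) else v S

/-- Influence of the pair `(i,j)`: `Inf_{ij}[v] = (1/2)·E_{|S|=ℓ}[(v^{(ij)}_S - v_S)²]`. -/
noncomputable def infl (n ℓ : ℕ) (v : Finset (Fin n) → ℝ) (i j : Fin n) : ℝ :=
  (1 / 2) * ((n.choose ℓ : ℝ))⁻¹ *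
    ∑ S ∈ Finset.univ.filter (fun S : Finset (Fin n) => S.card = ℓ),
      (exchg n v i j S - v S) ^ 2

/-- Total influence `Inf[v] = (1/n) Σ_{i<j} Inf_{ij}[v]`. -/
noncomputable def totInf (n ℓ : ℕ) (v : Finset (Fin n) → ℝ) : ℝ :=
  (1 / (n : ℝ)) * ∑ i : Fin n, ∑ j : Fin n, if i < j then infl n ℓ v i j else 0

/-- Expectation `E[f]` over a uniform `ℓ`-subset. -/
noncomputable def slicemean (n ℓ : ℕ) (v : Finset (Fin n) → ℝ) : ℝ :=
  ((n.choose ℓ : ℝ))⁻¹ *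
    ∑ S ∈ Finset.univ.filter (fun S : Finset (Fin n) => S.card = ℓ), v S

/- ### Auxiliary machinery -/

/-- Sum of `f` over the `ℓ`-sets containing `i` but not `j`. -/
noncomputable def Asum (n ℓ : ℕ) (i j : Fin n) (f : Finset (Fin n) → ℝ) : ℝ :=
  ∑ S ∈ Finset.univ.filter
      (fun S : Finset (Fin n) => S.card = ℓ ∧ i ∈ S ∧ j ∉ S), f S

lemma sd_insert {n : ℕ} {i j : Fin n} (hij : i ≠ j) {S : Finset (Fin n)}
    (hi : i ∈ S) (hj : j ∉ S) : symmDiff S {i, j} = insert j (S.erase i) := by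
  ext a
  simp only [Finset.mem_symmDiff, Finset.mem_insert, Finset.mem_singleton, Finset.mem_erase]
  by_cases hai : a = i <;> by_cases haj : a = j <;> subst_vars <;> tauto

lemma sd_card {n : ℕ} {i j : Fin n} (hij : i ≠ j) {S : Finset (Fin n)}
    (hi : i ∈ S) (hj : j ∉ S) : (symmDiff S {i, j}).card = S.card := by
  rw [sd_insert hij hi hj, Finset.card_insert_of_notMem (by simp [hj]),
    Finset.card_erase_of_mem hi]
  have : 1 ≤ S.card := Finset.card_pos.2 ⟨i, hi⟩
  omega

lemma sd_mem {n : ℕ} {i j : Fin n} (hij : i ≠ j) {S : Finset (Fin n)}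
    (hi : i ∈ S) (hj : j ∉ S) : j ∈ symmDiff S {i, j} ∧ i ∉ symmDiff S {i, j} := by
  rw [sd_insert hij hi hj]
  simp [Finset.mem_insert, Finset.mem_erase, hij]

lemma sd_sd {n : ℕ} (i j : Fin n) (S : Finset (Fin n)) :
    symmDiff (symmDiff S {i, j}) {j, i} = S := by
  rw [Finset.pair_comm j i]; exact symmDiff_symmDiff_cancel_right _ _

lemma Asum_sd {n ℓ : ℕ} {i j : Fin n} (hij : i ≠ j) (f : Finset (Fin n) → ℝ) :
    Asum n ℓ i j (fun S => f (symmDiff S {i, j})) = Asum n ℓ j i f := by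
  unfold Asum
  refine Finset.sum_bij' (fun S _ => symmDiff S {i, j}) (fun S _ => symmDiff S {j, i})
    ?_ ?_ ?_ ?_ ?_
  · intro S hS
    simp only [Finset.mem_filter, Finset.mem_univ, true_and] at hS ⊢
    obtain ⟨hc, hi, hj⟩ := hS
    exact ⟨(sd_card hij hi hj).trans hc, (sd_mem hij hi hj).1, (sd_mem hij hi hj).2⟩
  · intro S hS
    simp only [Finset.mem_filter, Finset.mem_univ, true_and] at hS ⊢
    obtain ⟨hc, hjmem, himem⟩ := hS
    exact ⟨(sd_card hij.symm hjmem himem).trans hc, (sd_mem hij.symm hjmem himem).1,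
      (sd_mem hij.symm hjmem himem).2⟩
  · intro S _; exact sd_sd i j S
  · intro S _; exact sd_sd j i S
  · intro S _; rfl

lemma Asum_diag {n ℓ : ℕ} (i : Fin n) (f : Finset (Fin n) → ℝ) : Asum n ℓ i i f = 0 := by
  unfold Asum
  rw [Finset.filter_eq_empty_iff.2 (fun S _ => by rintro ⟨-, h1, h2⟩; exact h2 h1),
    Finset.sum_empty]

lemma voting_term (n ℓ : ℕ) (v : Finset (Fin n) → ℝ) (i j : Fin n) :
    Asum n ℓ i j (fun S => v S * v (symmDiff S {i, j}))
      = (Asum n ℓ i j (fun S => v S ^ 2) + Asum n ℓ j i (fun S => v S ^ 2)) / 2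
        - Asum n ℓ i j (fun S => (v (symmDiff S {i, j}) - v S) ^ 2) / 2 := by
  rcases eq_or_ne i j with rfl | hij
  · simp [Asum_diag]
  · rw [← Asum_sd hij (fun S => v S ^ 2)]
    unfold Asum
    rw [← Finset.sum_add_distrib, Finset.sum_div, Finset.sum_div, ← Finset.sum_sub_distrib]
    exact Finset.sum_congr rfl fun S _ => by dsimp only; ring

lemma inter_pair_left {n : ℕ} {i j : Fin n} (hij : i ≠ j) {S : Finset (Fin n)}
    (hi : i ∈ S) (hj : j ∉ S) : S ∩ {i, j} = {i} := by
  ext a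
  simp only [Finset.mem_inter, Finset.mem_insert, Finset.mem_singleton]
  constructor
  · rintro ⟨ha, rfl | rfl⟩
    · rfl
    · exact absurd ha hj
  · rintro rfl; exact ⟨hi, Or.inl rfl⟩

lemma infl_comm (n ℓ : ℕ) (v : Finset (Fin n) → ℝ) (i j : Fin n) :
    infl n ℓ v i j = infl n ℓ v j i := by
  unfold infl exchg
  simp only [Finset.pair_comm i j]

lemma Q_eq_infl {n ℓ : ℕ} (v : Finset (Fin n) → ℝ) {i j : Fin n} (hij : i ≠ j)
    (hN : (n.choose ℓ : ℝ) ≠ 0) :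
    Asum n ℓ i j (fun S => (v (symmDiff S {i, j}) - v S) ^ 2)
      = (n.choose ℓ : ℝ) * infl n ℓ v i j := by
  have hQcomm : Asum n ℓ j i (fun S => (v (symmDiff S {j, i}) - v S) ^ 2)
      = Asum n ℓ i j (fun S => (v (symmDiff S {i, j}) - v S) ^ 2) := by
    rw [← Asum_sd hij (fun S => (v (symmDiff S {j, i}) - v S) ^ 2)]
    unfold Asum
    refine Finset.sum_congr rfl fun S _ => ?_
    dsimp only
    rw [sd_sd i j S]
    ring
  have hsplit : ∀ S : Finset (Fin n),
      (exchg n v i j S - v S) ^ 2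
        = (if i ∈ S ∧ j ∉ S then (v (symmDiff S {i, j}) - v S) ^ 2 else 0)
          + (if j ∈ S ∧ i ∉ S then (v (symmDiff S {j, i}) - v S) ^ 2 else 0) := by
    intro S
    unfold exchg
    by_cases hi : i ∈ S <;> by_cases hj : j ∈ S
    · have h2 : S ∩ {i, j} = {i, j} := by
        rw [Finset.inter_eq_right.2]
        intro a ha
        simp only [Finset.mem_insert, Finset.mem_singleton] at ha
        rcases ha with rfl | rfl <;> assumption
      rw [h2, Finset.card_pair hij]
      simp [hi, hj]
    · rw [inter_pair_left hij hi hj]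
      simp [hi, hj, Finset.card_singleton]
    · rw [Finset.pair_comm i j, inter_pair_left hij.symm hj hi]
      simp only [Finset.card_singleton, if_pos rfl]
      rw [Finset.pair_comm j i]
      simp [hi, hj]
    · have h0 : S ∩ {i, j} = ∅ := by
        ext a
        simp only [Finset.mem_inter, Finset.mem_insert, Finset.mem_singleton,
          Finset.notMem_empty, iff_false, not_and]
        rintro ha (rfl | rfl)
        · exact hi ha
        · exact hj ha
      rw [h0]
      simp [hi, hj]
  have hK : ∑ S ∈ Finset.univ.filter (fun S : Finset (Fin n) => S.card = ℓ),
      (exchg n v i j S - v S) ^ 2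
      = 2 * Asum n ℓ i j (fun S => (v (symmDiff S {i, j}) - v S) ^ 2) := by
    rw [Finset.sum_congr rfl (fun S _ => hsplit S), Finset.sum_add_distrib,
      ← Finset.sum_filter, ← Finset.sum_filter, Finset.filter_filter, Finset.filter_filter]
    unfold Asum at hQcomm ⊢
    rw [hQcomm]
    ring
  unfold infl
  rw [hK]
  field_simp

lemma sum_Asum_sq (n ℓ : ℕ) (hℓ : ℓ ≤ n) (v : Finset (Fin n) → ℝ) :
    ∑ i : Fin n, ∑ j : Fin n, Asum n ℓ i j (fun S => v S ^ 2)
      = (ℓ : ℝ) * ((n : ℝ) - ℓ) * sqnorm n ℓ v := by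
  have hA : ∀ i j : Fin n, Asum n ℓ i j (fun S => v S ^ 2)
      = ∑ S ∈ Finset.univ.filter (fun S : Finset (Fin n) => S.card = ℓ),
          (if i ∈ S ∧ j ∉ S then v S ^ 2 else 0) := by
    intro i j
    unfold Asum
    rw [← Finset.filter_filter, Finset.sum_filter]
  simp only [hA]
  have swap1 : ∀ i : Fin n,
      (∑ j : Fin n, ∑ S ∈ Finset.univ.filter (fun S : Finset (Fin n) => S.card = ℓ),
        (if i ∈ S ∧ j ∉ S then v S ^ 2 else 0))
      = ∑ S ∈ Finset.univ.filter (fun S : Finset (Fin n) => S.card = ℓ),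
          ∑ j : Fin n, (if i ∈ S ∧ j ∉ S then v S ^ 2 else 0) :=
    fun i => Finset.sum_comm
  simp only [swap1]
  rw [Finset.sum_comm]
  rw [show (∑ S ∈ Finset.univ.filter (fun S : Finset (Fin n) => S.card = ℓ),
      ∑ i : Fin n, ∑ j : Fin n, (if i ∈ S ∧ j ∉ S then v S ^ 2 else 0))
      = ∑ S ∈ Finset.univ.filter (fun S : Finset (Fin n) => S.card = ℓ),
        (ℓ : ℝ) * ((n : ℝ) - ℓ) * v S ^ 2 from ?_]
  · unfold sqnorm
    rw [Finset.mul_sum]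
  · refine Finset.sum_congr rfl fun S hS => ?_
    have hcard : S.card = ℓ := (Finset.mem_filter.1 hS).2
    have hinner : ∀ i : Fin n, ∑ j : Fin n, (if i ∈ S ∧ j ∉ S then v S ^ 2 else 0)
        = if i ∈ S then ((n : ℝ) - ℓ) * v S ^ 2 else 0 := by
      intro i
      by_cases hi : i ∈ S
      · simp only [hi, true_and, if_pos]
        rw [← Finset.sum_filter, Finset.sum_const]
        have hfc : Finset.univ.filter (fun j : Fin n => j ∉ S) = Sᶜ := by
          ext a; simp [Finset.mem_compl]
        rw [hfc, Finset.card_compl, hcard]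
        simp only [Fintype.card_fin, nsmul_eq_mul]
        rw [Nat.cast_sub hℓ]
      · simp [hi]
    simp only [hinner]
    rw [← Finset.sum_filter, Finset.sum_const, Finset.filter_univ_mem, hcard,
      nsmul_eq_mul]
    ring

lemma sum_voting_eq (n ℓ : ℕ) (hℓ : ℓ ≤ n) (v : Finset (Fin n) → ℝ)
    (hN : (n.choose ℓ : ℝ) ≠ 0) :
    ∑ i : Fin n, ∑ j : Fin n, voting n ℓ v i j
      = (ℓ : ℝ) * ((n : ℝ) - ℓ) * sqnorm n ℓ v
        - (n.choose ℓ : ℝ) *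
          ∑ i : Fin n, ∑ j : Fin n, (if i < j then infl n ℓ v i j else 0) := by
  have hv : ∀ i j : Fin n, voting n ℓ v i j
      = Asum n ℓ i j (fun S => v S * v (symmDiff S {i, j})) := by
    intro i j
    rcases eq_or_ne i j with rfl | hij
    · rw [voting, if_pos rfl, Asum_diag]
    · rw [voting, if_neg hij]; rfl
  have hQ : ∀ i j : Fin n,
      Asum n ℓ i j (fun S => (v (symmDiff S {i, j}) - v S) ^ 2)
        = (if i < j then (n.choose ℓ : ℝ) * infl n ℓ v i j else 0)
          + (if j < i then (n.choose ℓ : ℝ) * infl n ℓ v i j else 0) := by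
    intro i j
    rcases lt_trichotomy i j with h | rfl | h
    · rw [if_pos h, if_neg (asymm h), add_zero, Q_eq_infl v h.ne hN]
    · simp [Asum_diag]
    · rw [if_neg (asymm h), if_pos h, zero_add, Q_eq_infl v (ne_of_gt h) hN]
  simp only [hv, voting_term, hQ]
  simp only [Finset.sum_sub_distrib, add_div, Finset.sum_add_distrib, ← Finset.sum_div]
  have e1 : (∑ i : Fin n, ∑ j : Fin n, Asum n ℓ j i (fun S => v S ^ 2))
      = ∑ i : Fin n, ∑ j : Fin n, Asum n ℓ i j (fun S => v S ^ 2) := Finset.sum_comm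
  have e2 : (∑ i : Fin n, ∑ j : Fin n,
        (if j < i then (n.choose ℓ : ℝ) * infl n ℓ v i j else 0))
      = ∑ i : Fin n, ∑ j : Fin n,
        (if i < j then (n.choose ℓ : ℝ) * infl n ℓ v i j else 0) := by
    rw [Finset.sum_comm]
    exact Finset.sum_congr rfl fun i _ => Finset.sum_congr rfl fun j _ => by
      rw [infl_comm n ℓ v]
  have e3 := sum_Asum_sq n ℓ hℓ v
  have e4 : (∑ i : Fin n, ∑ j : Fin n,
        (if i < j then (n.choose ℓ : ℝ) * infl n ℓ v i j else 0))
      = (n.choose ℓ : ℝ) *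
          ∑ i : Fin n, ∑ j : Fin n, (if i < j then infl n ℓ v i j else 0) := by
    simp only [Finset.mul_sum, mul_ite, mul_zero]
  linarith [e1, e2, e3, e4]

/-- If `v` lies in the span of the eigenspaces `Y_0, …, Y_m` of the Johnson scheme —
equivalently (Filmus' Poincaré inequality) `Inf[v] ≤ m·Var[v]` — then
`Σ_{i,j} V_{ij}(v) ≥ ((ℓ - m)n - ℓ²)·‖v‖²`. -/
theorem stmt10 (n ℓ m : ℕ) (hℓ : ℓ ≤ n) (hm : m ≤ ℓ) (v : Finset (Fin n) → ℝ)
    (hpoincare : totInf n ℓ v ≤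
      m * (slicemean n ℓ (fun S => v S ^ 2) - (slicemean n ℓ v) ^ 2)) :
    (((ℓ : ℝ) - m) * n - (ℓ : ℝ) ^ 2) * sqnorm n ℓ v
      ≤ ∑ i : Fin n, ∑ j : Fin n, voting n ℓ v i j := by
  have hN : (n.choose ℓ : ℝ) ≠ 0 := by
    exact_mod_cast (Nat.choose_pos hℓ).ne'
  have hN0 : (0 : ℝ) ≤ (n.choose ℓ : ℝ) := Nat.cast_nonneg _
  rw [sum_voting_eq n ℓ hℓ v hN]
  -- relate the double sum to totInf
  have htot : (∑ i : Fin n, ∑ j : Fin n, (if i < j then infl n ℓ v i j else 0))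
      = (n : ℝ) * totInf n ℓ v := by
    unfold totInf
    rcases Nat.eq_zero_or_pos n with rfl | hn
    · simp
    · have : (n : ℝ) ≠ 0 := by positivity
      field_simp
  rw [htot]
  -- sqnorm = N * E[v^2]
  have h1 : (n.choose ℓ : ℝ) * slicemean n ℓ (fun S => v S ^ 2) = sqnorm n ℓ v := by
    unfold slicemean sqnorm
    rw [← mul_assoc, mul_inv_cancel₀ hN, one_mul]
  have hVar : (n.choose ℓ : ℝ) *
      (slicemean n ℓ (fun S => v S ^ 2) - (slicemean n ℓ v) ^ 2) ≤ sqnorm n ℓ v := by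
    nlinarith [sq_nonneg (slicemean n ℓ v)]
  have hsq : (0 : ℝ) ≤ sqnorm n ℓ v := by
    unfold sqnorm
    exact Finset.sum_nonneg fun S _ => sq_nonneg _
  -- main chain
  have hchain : (n.choose ℓ : ℝ) * ((n : ℝ) * totInf n ℓ v)
      ≤ (n : ℝ) * m * sqnorm n ℓ v := by
    have hp : (n.choose ℓ : ℝ) * (n : ℝ) * totInf n ℓ v
        ≤ (n.choose ℓ : ℝ) * (n : ℝ) * ((m : ℝ) *
            (slicemean n ℓ (fun S => v S ^ 2) - (slicemean n ℓ v) ^ 2)) := by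
      apply mul_le_mul_of_nonneg_left hpoincare
      positivity
    have hmn : (0 : ℝ) ≤ (n : ℝ) * m := by positivity
    nlinarith [mul_le_mul_of_nonneg_left hVar hmn]
  nlinarith [hchain, mul_nonneg hsq (Nat.cast_nonneg (α := ℝ) m)]
end
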